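/- An ε-locking scheme has small accessible information: if E : [2^n]×[t] → S(C) is ε-locking with ε ≤ 1/(2e), then for X uniform on [2^n], K uniform on [t], and any measurement on C with outcome I applied to E(X,K), the mutual information satisfies I(X; I) ≤ 2εn + η(ε), where η(ε) = −2ε ln(2ε). -/

import Mathlib

/-!
Rather than Fannes' inequality, a direct bound suffices. For the posterior `q` of `X` given an
outcome, `n - H(q)` is `D(q ‖ u) / ln 2` with `u = 1/N` uniform. Where `q > u`, split
`q ln(Nq) = u ln(Nq) + (q - u) ln(Nq)`: `ln x ≤ x - 1` bounds the first term by `q - u`, and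
`q ≤ 1` bounds the second by `(q - u) ln N`. Hence `D(q ‖ u) ≤ Δ(q, u) (1 + ln N)` nats. Now
`Δ ≤ ε`, `ln 2 > 1/2` and `2ε ≤ η(ε)` (because `2ε ≤ 1/e`) give `2εn + η(ε)` bits, and
averaging over the outcomes bounds `I(X; I)`.
-/

open Matrix
open scoped BigOperators ComplexOrder

/-- The joint probability `P(I = i, X = x)` for the message `X` uniform on `[2^n]`, the
key `K` uniform on `[t]` and independent of `X`, and the POVM `{M_i}` measured on the
ciphertext `E(X, K)`. -/
noncomputable def lockProb16 (N t dC m : ℕ)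
    (E : Fin N → Fin t → Matrix (Fin dC) (Fin dC) ℂ)
    (M : Fin m → Matrix (Fin dC) (Fin dC) ℂ) (i : Fin m) (x : Fin N) : ℝ :=
  (1 / ((N : ℝ) * t)) * ∑ k, ((M i * E x k).trace).re

open Real Finset

lemma mul_log_mul_le {N q : ℝ} (hN : 0 < N) (hq0 : 0 ≤ q) (hq1 : q ≤ 1) :
    q * log (N * q) ≤ (|q - N⁻¹| + (q - N⁻¹)) / 2 * (1 + log N) := by
  rcases le_total q N⁻¹ with hle | hge
  · have hNq : N * q ≤ 1 := by rwa [← le_div_iff₀' hN, one_div]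
    rw [abs_of_nonpos (sub_nonpos.2 hle), neg_add_cancel, zero_div, zero_mul]
    exact mul_nonpos_of_nonneg_of_nonpos hq0 (log_nonpos (by positivity) hNq)
  · have hq : 0 < q := (inv_pos.2 hN).trans_le hge
    rw [abs_of_nonneg (sub_nonneg.2 hge), add_self_div_two]
    have hfirst : N⁻¹ * log (N * q) ≤ q - N⁻¹ := by
      calc N⁻¹ * log (N * q) ≤ N⁻¹ * (N * q - 1) :=
            mul_le_mul_of_nonneg_left (log_le_sub_one_of_pos (by positivity)) (by positivity)
        _ = q - N⁻¹ := by field_simp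
    have hsecond : log (N * q) ≤ log N := by
      rw [log_mul hN.ne' hq.ne']
      linarith [log_nonpos hq0 hq1]
    nlinarith [mul_le_mul_of_nonneg_left hsecond (sub_nonneg.2 hge)]

theorem sum_mul_log_card_mul_le {ι : Type*} [Fintype ι] {q : ι → ℝ} (hq0 : ∀ x, 0 ≤ q x)
    (hq1 : ∑ x, q x = 1) :
    ∑ x, q x * log (Fintype.card ι * q x) ≤
      (1 / 2 * ∑ x, |q x - (Fintype.card ι : ℝ)⁻¹|) * (1 + log (Fintype.card ι)) := by
  have : Nonempty ι := by
    by_contra h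
    simp [not_nonempty_iff.1 h] at hq1
  have hcard : (0 : ℝ) < Fintype.card ι := by exact_mod_cast Fintype.card_pos
  have hle_one : ∀ x, q x ≤ 1 := fun x =>
    hq1 ▸ single_le_sum (fun y _ => hq0 y) (mem_univ x)
  have hmean : ∑ x, (q x - (Fintype.card ι : ℝ)⁻¹) = 0 := by
    rw [sum_sub_distrib, hq1, sum_const, card_univ, nsmul_eq_mul, mul_inv_cancel₀ hcard.ne',
      sub_self]
  calc ∑ x, q x * log (Fintype.card ι * q x)
      ≤ ∑ x, (|q x - (Fintype.card ι : ℝ)⁻¹| + (q x - (Fintype.card ι : ℝ)⁻¹)) / 2 *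
          (1 + log (Fintype.card ι)) :=
        sum_le_sum fun x _ => mul_log_mul_le hcard (hq0 x) (hle_one x)
    _ = (1 / 2 * ∑ x, |q x - (Fintype.card ι : ℝ)⁻¹|) * (1 + log (Fintype.card ι)) := by
        rw [← sum_mul, ← sum_div, sum_add_distrib, hmean]
        ring

lemma self_le_neg_mul_log {x : ℝ} (h0 : 0 ≤ x) (h1 : x ≤ exp (-1)) : x ≤ -x * log x := by
  rcases h0.eq_or_lt with rfl | hpos
  · simp
  · have hlog : log x ≤ -1 := by simpa using log_le_log hpos h1
    nlinarith

lemma sub_sum_neg_mul_logb_eq {n N : ℕ} (hN : N = 2 ^ n) {q : Fin N → ℝ} (hq1 : ∑ x, q x = 1) :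
    (n : ℝ) - ∑ x, -(q x * logb 2 (q x)) = (∑ x, q x * log (N * q x)) / log 2 := by
  have hN0 : (N : ℝ) ≠ 0 := by rw [hN]; positivity
  have hlogN : log N = n * log 2 := by rw [hN]; push_cast; rw [log_pow]
  have hsplit : ∀ x, q x * log (N * q x) = q x * log N + q x * log (q x) := by
    intro x
    rcases eq_or_ne (q x) 0 with h | h
    · simp [h]
    · rw [log_mul hN0 h]; ring
  have hlog2 : log 2 ≠ 0 := by positivity
  simp only [hsplit, sum_add_distrib, ← sum_mul, hq1, logb]
  rw [hlogN, sum_neg_distrib]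
  simp only [mul_div_assoc', ← sum_div]
  field_simp
  ring

theorem sub_entropy_le_of_tv_le {n N : ℕ} (hN : N = 2 ^ n) {q : Fin N → ℝ} (hq0 : ∀ x, 0 ≤ q x)
    (hq1 : ∑ x, q x = 1) {ε : ℝ} (hε : 0 ≤ ε) (hε' : ε ≤ 1 / (2 * exp 1))
    (hTV : 1 / 2 * ∑ x, |q x - 1 / (N : ℝ)| ≤ ε) :
    (n : ℝ) - ∑ x, -(q x * logb 2 (q x)) ≤ 2 * ε * n + (-(2 * ε) * log (2 * ε)) := by
  have hlog2 : 1 / 2 < log 2 := by linarith [log_two_gt_d9]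
  have hD := sum_mul_log_card_mul_le hq0 hq1
  simp only [Fintype.card_fin, ← one_div] at hD
  have hlogN : log N = n * log 2 := by rw [hN]; push_cast; rw [log_pow]
  have hη : 2 * ε ≤ -(2 * ε) * log (2 * ε) := by
    refine self_le_neg_mul_log (by positivity) ?_
    rw [exp_neg, ← one_div, le_div_iff₀ (exp_pos 1)]
    rw [le_div_iff₀ (by positivity)] at hε'
    linarith
  have hεn : 0 ≤ ε * n * log 2 := by positivity
  rw [sub_sum_neg_mul_logb_eq hN hq1, div_le_iff₀ (by linarith)]
  calc ∑ x, q x * log (N * q x) ≤ ε * (1 + n * log 2) := hD.trans (by rw [hlogN]; gcongr)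
    _ ≤ (2 * ε * n + 2 * ε) * log 2 := by nlinarith
    _ ≤ (2 * ε * n + -(2 * ε) * log (2 * ε)) * log 2 := by gcongr

lemma Matrix.PosSemidef.re_trace_mul_nonneg {n : Type*} [Fintype n] [DecidableEq n]
    {A B : Matrix n n ℂ} (hA : A.PosSemidef) (hB : B.PosSemidef) : 0 ≤ (A * B).trace.re := by
  obtain ⟨P, rfl⟩ : ∃ P : Matrix n n ℂ, A = Pᴴ * P := by
    open scoped MatrixOrder Matrix.Norms.L2Operator in
    exact CStarAlgebra.nonneg_iff_eq_star_mul_self.mp hA.nonneg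
  have htrace : (Pᴴ * P * B).trace = (P * B * Pᴴ).trace := by
    rw [Matrix.mul_assoc, trace_mul_comm, Matrix.mul_assoc]
  rw [htrace]
  exact (Complex.nonneg_iff.1 (hB.mul_mul_conjTranspose_same P).trace_nonneg).1

section Locking

variable {N t dC m : ℕ} {E : Fin N → Fin t → Matrix (Fin dC) (Fin dC) ℂ}
  {M : Fin m → Matrix (Fin dC) (Fin dC) ℂ}

lemma lockProb16_nonneg (hE : ∀ x k, (E x k).PosSemidef) (hM : ∀ i, (M i).PosSemidef)
    (i : Fin m) (x : Fin N) : 0 ≤ lockProb16 N t dC m E M i x :=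
  mul_nonneg (by positivity) (sum_nonneg fun k _ => (hM i).re_trace_mul_nonneg (hE x k))

lemma sum_sum_lockProb16 (hN : 0 < N) (ht : 0 < t) (hEtr : ∀ x k, (E x k).trace = 1)
    (hM1 : ∑ i, M i = 1) : ∑ i, ∑ x, lockProb16 N t dC m E M i x = 1 := by
  have hk : ∀ x k, ∑ i, ((M i * E x k).trace).re = 1 := fun x k => by
    rw [← Complex.re_sum, ← trace_sum, ← sum_mul, hM1, one_mul, hEtr, Complex.one_re]
  simp only [lockProb16, ← mul_sum]
  rw [sum_comm]
  simp only [sum_comm (γ := Fin m), hk, sum_const, card_univ, Fintype.card_fin, nsmul_eq_mul]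
  field_simp

end Locking

lemma sub_sum_mul_le_of_forall {ι : Type*} [Fintype ι] {p H : ι → ℝ} {c R : ℝ}
    (hp0 : ∀ i, 0 ≤ p i) (hp1 : ∑ i, p i = 1) (h : ∀ i, 0 < p i → c - H i ≤ R) :
    c - ∑ i, p i * H i ≤ R := by
  have hbound : ∀ i, p i * (c - H i) ≤ p i * R := fun i => by
    rcases (hp0 i).eq_or_lt with hi | hi
    · simp [← hi]
    · exact mul_le_mul_of_nonneg_left (h i hi) hi.le
  calc c - ∑ i, p i * H i = ∑ i, p i * (c - H i) := by
        simp only [mul_sub, sum_sub_distrib, ← sum_mul, hp1, one_mul]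
    _ ≤ ∑ i, p i * R := sum_le_sum fun i _ => hbound i
    _ = R := by rw [← sum_mul, hp1, one_mul]

theorem stmt16 (n N t dC : ℕ) (hN : N = 2 ^ n) (ht : 0 < t)
    (ε : ℝ) (hε : 0 < ε) (hε' : ε ≤ 1 / (2 * Real.exp 1))
    (E : Fin N → Fin t → Matrix (Fin dC) (Fin dC) ℂ)
    (hEpsd : ∀ x k, (E x k).PosSemidef) (hEtr : ∀ x k, (E x k).trace = 1)
    (hlock : ∀ (m : ℕ) (M : Fin m → Matrix (Fin dC) (Fin dC) ℂ),
      (∀ i, (M i).PosSemidef) → (∑ i, M i = 1) →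
      ∀ i : Fin m, 0 < ∑ x, lockProb16 N t dC m E M i x →
        (1 / 2) * ∑ x : Fin N,
            |lockProb16 N t dC m E M i x / (∑ x', lockProb16 N t dC m E M i x')
              - 1 / (N : ℝ)| ≤ ε) :
    ∀ (m : ℕ) (M : Fin m → Matrix (Fin dC) (Fin dC) ℂ),
      (∀ i, (M i).PosSemidef) → (∑ i, M i = 1) →
      (n : ℝ) - ∑ i : Fin m, (∑ x, lockProb16 N t dC m E M i x) *
          (∑ x : Fin N,
            -((lockProb16 N t dC m E M i x / (∑ x', lockProb16 N t dC m E M i x')) *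
              Real.logb 2
                (lockProb16 N t dC m E M i x / (∑ x', lockProb16 N t dC m E M i x'))))
        ≤ 2 * ε * n + (-(2 * ε) * Real.log (2 * ε)) := by
  intro m M hM hM1
  have hp0 : ∀ i x, 0 ≤ lockProb16 N t dC m E M i x := lockProb16_nonneg hEpsd hM
  refine sub_sum_mul_le_of_forall (fun i => sum_nonneg fun x _ => hp0 i x)
    (sum_sum_lockProb16 (hN ▸ by positivity) ht hEtr hM1) fun i hi => ?_
  refine sub_entropy_le_of_tv_le hN (fun x => div_nonneg (hp0 i x) hi.le) ?_ hε.le hε'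
    (hlock m M hM hM1 i hi)
  rw [← sum_div, div_self hi.ne']
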